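/- Let 0 < α ≤ 1, j ≥ 1 an integer, and let b ∈ L^∞(R^n) be supported in the cube Q = Q(x_0, r) with ∫_{R^n} b(x) dx = 0. Then for every x with |x − x_0| > √n · r, the varying-aperture intrinsic square function satisfies S_{α,2^j}(b)(x) ≤ C · 2^{j(3n+2α)/2} · ‖b‖_{L^∞} · r^{n+α} / |x − x_0|^{n+α}, where C depends only on n and α. -/

import Mathlib

/-!
The zero mean of `b` lets one replace `φ_t(y - z)` by `φ_t(y - z) - φ_t(y - x₀)` in `b * φ_t(y)`;
on the cube this difference is at most `(√n r / 2)^α t^{-(n+α)}` by Hölder continuity, so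
`A_α(b)(y, t) ≲ M r^{n+α} t^{-(n+α)}` everywhere. If `y` lies in the cone `B(x, 2^j t)` and
`t < |x - x₀| / 2^{j+2}`, then `φ_t(y - ·)` vanishes on the cube and `A_α(b)(y, t) = 0`.
Integrating the square of the bound over the remaining part of the cone, the ball `B(x, 2^j t)`
contributes `2^{jn}` and the lower limit `t₀ = |x - x₀| / 2^{j+2}` contributes
`t₀^{-2(n+α)} = 2^{(j+2)(2n+2α)} |x - x₀|^{-2(n+α)}`, which gives the factor `2^{j(3n+2α)}`.
-/

open MeasureTheory Metric Set

noncomputable section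

abbrev En (n : ℕ) := EuclideanSpace ℝ (Fin n)

/-- The axis-parallel cube centered at `x0` with side length `r`. -/
def cube (n : ℕ) (x0 : En n) (r : ℝ) : Set (En n) := {x | ∀ i, |x i - x0 i| ≤ r / 2}

/-- Weighted measure of a set: `w(E) = ∫_E w`. -/
def wSet (n : ℕ) (w : En n → ℝ) (E : Set (En n)) : ℝ := ∫ x in E, w x

/-- The Muckenhoupt `A_q` integral condition for `q > 1` with constant `C`. -/
def AqCond (n : ℕ) (w : En n → ℝ) (q C : ℝ) : Prop :=
  ∀ (x0 : En n) (r : ℝ), 0 < r →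
    ((∫ x in cube n x0 r, w x) / r ^ n) *
      ((∫ x in cube n x0 r, w x ^ (-(1 / (q - 1)))) / r ^ n) ^ (q - 1) ≤ C

/-- The Muckenhoupt `A_1` condition with constant `C`. -/
def A1Cond (n : ℕ) (w : En n → ℝ) (C : ℝ) : Prop :=
  ∀ (x0 : En n) (r : ℝ), 0 < r →
    (∫ x in cube n x0 r, w x) / r ^ n ≤
      C * essInf w (volume.restrict (cube n x0 r))

/-- `w` is an `A_q` weight (`q ≥ 1`) with constant `C`. -/
def IsAq (n : ℕ) (w : En n → ℝ) (q C : ℝ) : Prop :=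
  (∀ x, 0 ≤ w x) ∧ LocallyIntegrable w ∧
    ((q = 1 ∧ A1Cond n w C) ∨ (1 < q ∧ AqCond n w q C))

/-- The dilation `φ_t(x) = t^{-n} φ(x/t)`. -/
def dilate (n : ℕ) (φ : En n → ℝ) (t : ℝ) (x : En n) : ℝ :=
  t ^ (-(n : ℝ)) * φ (t⁻¹ • x)

/-- The family `C_α`: supported in the unit ball, zero mean, `α`-Hölder constant ≤ 1. -/
def Calpha (n : ℕ) (α : ℝ) : Set (En n → ℝ) :=
  {φ | (∀ x, 1 < ‖x‖ → φ x = 0) ∧ (∫ x, φ x) = 0 ∧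
    ∀ x x', |φ x - φ x'| ≤ ‖x - x'‖ ^ α}

/-- `A_α(f)(y,t) = sup_{φ ∈ C_α} |f * φ_t(y)|`. -/
def Aalpha (n : ℕ) (α : ℝ) (f : En n → ℝ) (y : En n) (t : ℝ) : ℝ :=
  sSup {v | ∃ φ ∈ Calpha n α, v = |∫ z, f z * dilate n φ t (y - z)|}

/-- The varying-aperture intrinsic square function `S_{α,β}(f)`. -/
def SalphaBeta (n : ℕ) (α β : ℝ) (f : En n → ℝ) (x : En n) : ℝ :=
  Real.sqrt (∫ t in Ioi (0 : ℝ), ∫ y in ball x (β * t),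
    (Aalpha n α f y t) ^ 2 / t ^ (n + 1))

/-- The intrinsic square function `S_α(f)` (aperture one). -/
def Salpha (n : ℕ) (α : ℝ) (f : En n → ℝ) (x : En n) : ℝ :=
  SalphaBeta n α 1 f x

/-- The intrinsic `g^*_λ` function. -/
def gStar (n : ℕ) (α lam : ℝ) (f : En n → ℝ) (x : En n) : ℝ :=
  Real.sqrt (∫ t in Ioi (0 : ℝ), ∫ y,
    (t / (t + dist x y)) ^ (lam * n) * (Aalpha n α f y t) ^ 2 / t ^ (n + 1))

/-- The intrinsic Littlewood–Paley `g`-function. -/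
def gLittle (n : ℕ) (α : ℝ) (f : En n → ℝ) (x : En n) : ℝ :=
  Real.sqrt (∫ t in Ioi (0 : ℝ), (Aalpha n α f x t) ^ 2 / t)

lemma EuclideanSpace.norm_le_sqrt_card_mul {ι : Type*} [Fintype ι] {v : EuclideanSpace ℝ ι}
    {c : ℝ} (hc : 0 ≤ c) (hv : ∀ i, |v i| ≤ c) : ‖v‖ ≤ √(Fintype.card ι) * c := by
  rw [EuclideanSpace.norm_eq, ← Real.sqrt_sq hc, ← Real.sqrt_mul (Nat.cast_nonneg _)]
  gcongr
  calc ∑ i, ‖v i‖ ^ 2 ≤ ∑ _i : ι, c ^ 2 := by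
        gcongr with i
        rw [Real.norm_eq_abs]
        exact hv i
    _ = Fintype.card ι * c ^ 2 := by simp

lemma cube_eq_preimage_Icc (n : ℕ) (x0 : En n) (r : ℝ) :
    cube n x0 r = WithLp.ofLp ⁻¹' Icc (fun i => x0 i - r / 2) (fun i => x0 i + r / 2) := by
  ext x
  simp only [cube, mem_ofPred_eq, mem_preimage, mem_Icc, Pi.le_def, abs_le, ← forall_and]
  exact forall_congr' fun i => by constructor <;> intro h <;> constructor <;> linarith [h.1, h.2]

lemma volume_cube (n : ℕ) (x0 : En n) (r : ℝ) :
    volume (cube n x0 r) = ENNReal.ofReal r ^ n := by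
  rw [cube_eq_preimage_Icc, (PiLp.volume_preserving_ofLp (Fin n)).measure_preimage
    measurableSet_Icc.nullMeasurableSet, Real.volume_Icc_pi]
  simp

lemma cube_subset_closedBall (n : ℕ) (x0 : En n) {r : ℝ} (hr : 0 ≤ r) :
    cube n x0 r ⊆ closedBall x0 (√n * (r / 2)) := fun z hz => by
  rw [mem_closedBall, dist_eq_norm]
  simpa using EuclideanSpace.norm_le_sqrt_card_mul (v := z - x0) (by positivity) hz

lemma abs_dilate_sub_dilate_le {n : ℕ} {α : ℝ} (hα : 0 ≤ α) {φ : En n → ℝ}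
    (hφ : ∀ x x', |φ x - φ x'| ≤ ‖x - x'‖ ^ α) {t ρ : ℝ} (ht : 0 < t) {u v : En n}
    (huv : ‖u - v‖ ≤ ρ) :
    |dilate n φ t u - dilate n φ t v| ≤ ρ ^ α * t ^ (-((n : ℝ) + α)) := by
  have hρ : 0 ≤ ρ := (norm_nonneg _).trans huv
  calc |dilate n φ t u - dilate n φ t v|
      = t ^ (-(n : ℝ)) * |φ (t⁻¹ • u) - φ (t⁻¹ • v)| := by
        rw [dilate, dilate, ← mul_sub, abs_mul, abs_of_pos (by positivity)]
    _ ≤ t ^ (-(n : ℝ)) * (t⁻¹ * ρ) ^ α := by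
        gcongr
        refine (hφ _ _).trans ?_
        rw [← smul_sub, norm_smul, Real.norm_of_nonneg (inv_nonneg.2 ht.le)]
        gcongr
    _ = ρ ^ α * t ^ (-((n : ℝ) + α)) := by
        rw [Real.mul_rpow (inv_nonneg.2 ht.le) hρ, Real.inv_rpow ht.le, ← Real.rpow_neg ht.le,
          neg_add, Real.rpow_add ht]
        ring

lemma abs_integral_mul_dilate_le {n : ℕ} {α : ℝ} (hα : 0 ≤ α) {φ : En n → ℝ}
    (hφ : ∀ x x', |φ x - φ x'| ≤ ‖x - x'‖ ^ α) {b : En n → ℝ} {S : Set (En n)} {M ρ t : ℝ}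
    {x0 : En n} (hρ : 0 ≤ ρ) (hS : volume S < ⊤) (hSρ : S ⊆ closedBall x0 ρ) (hbM : ∀ z, |b z| ≤ M)
    (hbS : ∀ z ∉ S, b z = 0) (hb : Integrable b) (hmean : ∫ z, b z = 0) (ht : 0 < t) (y : En n) :
    |∫ z, b z * dilate n φ t (y - z)| ≤ M * volume.real S * (ρ ^ α * t ^ (-((n : ℝ) + α))) := by
  have hM : 0 ≤ M := (abs_nonneg _).trans (hbM 0)
  -- `φ` need not be measurable: a non-integrable integrand has Bochner integral `0`.
  by_cases hi : Integrable fun z => b z * dilate n φ t (y - z)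
  swap
  · rw [integral_undef hi, abs_zero]
    positivity
  set c := dilate n φ t (y - x0)
  have hcentred : ∫ z, b z * dilate n φ t (y - z) = ∫ z in S, b z * (dilate n φ t (y - z) - c) := by
    rw [setIntegral_eq_integral_of_forall_compl_eq_zero fun z hz => by rw [hbS z hz, zero_mul]]
    simp_rw [mul_sub]
    rw [integral_sub hi (hb.mul_const c), integral_mul_const, hmean, zero_mul, sub_zero]
  rw [hcentred, ← Real.norm_eq_abs]
  refine (norm_setIntegral_le_of_norm_le_const (C := M * (ρ ^ α * t ^ (-((n : ℝ) + α)))) hS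
    fun z hz => ?_).trans_eq (by ring)
  rw [norm_mul, Real.norm_eq_abs, Real.norm_eq_abs]
  refine mul_le_mul (hbM z) (abs_dilate_sub_dilate_le hα hφ ht ?_) (abs_nonneg _) hM
  rw [sub_sub_sub_cancel_left, ← dist_eq_norm']
  exact mem_closedBall.1 (hSρ hz)

lemma zero_mem_Calpha (n : ℕ) (α : ℝ) : (0 : En n → ℝ) ∈ Calpha n α :=
  ⟨fun _ _ => rfl, integral_zero _ _, fun x x' => by
    simpa using Real.rpow_nonneg (norm_nonneg (x - x')) α⟩

lemma Aalpha_le_of_forall_le {n : ℕ} {α K t : ℝ} {f : En n → ℝ} {y : En n}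
    (h : ∀ φ ∈ Calpha n α, |∫ z, f z * dilate n φ t (y - z)| ≤ K) : Aalpha n α f y t ≤ K :=
  csSup_le ⟨_, 0, zero_mem_Calpha n α, rfl⟩ fun _ ⟨φ, hφ, hv⟩ => hv ▸ h φ hφ

lemma Aalpha_nonneg (n : ℕ) (α : ℝ) (f : En n → ℝ) (y : En n) (t : ℝ) :
    0 ≤ Aalpha n α f y t :=
  Real.sSup_nonneg fun _ ⟨_, _, hv⟩ => hv ▸ abs_nonneg _

lemma Aalpha_eq_zero_of_forall_lt_norm_sub {n : ℕ} {α t : ℝ} {f : En n → ℝ} {y : En n}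
    (ht : 0 < t) (hfar : ∀ z, f z ≠ 0 → t < ‖y - z‖) : Aalpha n α f y t = 0 := by
  refine le_antisymm (Aalpha_le_of_forall_le fun φ hφ => ?_) (Aalpha_nonneg n α f y t)
  suffices ∀ z, f z * dilate n φ t (y - z) = 0 by simp [this]
  intro z
  by_cases hz : f z = 0
  · rw [hz, zero_mul]
  have hout : 1 < ‖t⁻¹ • (y - z)‖ := by
    rw [norm_smul, Real.norm_of_nonneg (inv_nonneg.2 ht.le), inv_mul_eq_div, one_lt_div ht]
    exact hfar z hz
  rw [dilate, hφ.1 _ hout, mul_zero, mul_zero]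

lemma lt_dist_of_dist_lt_half {X : Type*} [PseudoMetricSpace X] {x x0 y z : X} {β t : ℝ}
    (hz : dist z x0 < dist x x0 / 2) (hy : dist y x < β * t) (ht : (β + 1) * t ≤ dist x x0 / 2) :
    t < dist y z := by
  have := dist_triangle4 x y z x0
  rw [dist_comm x y] at this
  linarith

lemma setIntegral_Ioi_zero_le_of_le_rpow {F : ℝ → ℝ} {c p t0 : ℝ} (hc : 0 ≤ c) (hp : 0 < p)
    (ht0 : 0 < t0) (hsmall : ∀ t ∈ Ioo 0 t0, F t ≤ 0)
    (hlarge : ∀ t, t0 ≤ t → F t ≤ c * t ^ (-p - 1)) :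
    ∫ t in Ioi 0, F t ≤ c * (t0 ^ (-p) / p) := by
  have ha : -p - 1 < -1 := by linarith
  have hinter : Ioi 0 ∩ Ici t0 = Ici t0 := inter_eq_right.2 fun t ht => ht0.trans_le ht
  have hG :
      ∫ t in Ioi 0, (Ici t0).indicator (fun t => c * t ^ (-p - 1)) t = c * (t0 ^ (-p) / p) := by
    rw [setIntegral_indicator measurableSet_Ici, hinter, integral_Ici_eq_integral_Ioi,
      integral_const_mul, integral_Ioi_rpow_of_lt ha ht0, sub_add_cancel, neg_div_neg_eq]
  by_cases hF : IntegrableOn F (Ioi 0)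
  swap
  · rw [integral_undef hF]
    have := Real.rpow_pos_of_pos ht0 (-p)
    positivity
  rw [← hG]
  refine setIntegral_mono_on hF ?_ measurableSet_Ioi fun t ht => ?_
  · rw [IntegrableOn, integrable_indicator_iff measurableSet_Ici, IntegrableOn,
      Measure.restrict_restrict measurableSet_Ici, inter_comm, hinter]
    exact ((integrableOn_Ici_iff_integrableOn_Ioi).2
      (integrableOn_Ioi_rpow_of_lt ha ht0)).const_mul c
  · rcases lt_or_ge t t0 with h | h
    · rw [indicator_of_notMem (notMem_Ici.2 h)]
      exact hsmall t ⟨ht, h⟩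
    · rw [indicator_of_mem (mem_Ici.2 h)]
      exact hlarge t h

lemma volume_real_ball_of_pos {n : ℕ} (x : En n) {R : ℝ} (hR : 0 < R) :
    volume.real (ball x R) = R ^ n * volume.real (ball (0 : En n) 1) := by
  rw [Measure.real, Measure.addHaar_ball_of_pos volume x hR, ENNReal.toReal_mul,
    ENNReal.toReal_ofReal (by positivity), finrank_euclideanSpace_fin, Measure.real]

lemma SalphaBeta_le_of_Aalpha_le {n : ℕ} {α β K s t0 : ℝ} {f : En n → ℝ} {x : En n}
    (hβ : 0 < β) (hK : 0 ≤ K) (hs : 0 < s) (ht0 : 0 < t0)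
    (hvanish : ∀ t ∈ Ioo 0 t0, ∀ y ∈ ball x (β * t), Aalpha n α f y t = 0)
    (hbound : ∀ y t, 0 < t → Aalpha n α f y t ≤ K * t ^ (-s)) :
    SalphaBeta n α β f x ≤
      √(volume.real (ball (0 : En n) 1) * β ^ n / (2 * s)) * K * t0 ^ (-s) := by
  set V := volume.real (ball (0 : En n) 1)
  have hlarge : ∀ t, t0 ≤ t → ∫ y in ball x (β * t), Aalpha n α f y t ^ 2 / t ^ (n + 1)
      ≤ V * β ^ n * K ^ 2 * t ^ (-(2 * s) - 1) := fun t htt => by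
    have ht : 0 < t := ht0.trans_le htt
    calc ∫ y in ball x (β * t), Aalpha n α f y t ^ 2 / t ^ (n + 1)
        ≤ (K * t ^ (-s)) ^ 2 / t ^ (n + 1) * volume.real (ball x (β * t)) := by
          refine (Real.le_norm_self _).trans
            (norm_setIntegral_le_of_norm_le_const measure_ball_lt_top fun y _ => ?_)
          rw [Real.norm_of_nonneg (by positivity)]
          gcongr
          exacts [Aalpha_nonneg n α f y t, hbound y t ht]
      _ = V * β ^ n * K ^ 2 * t ^ (-(2 * s) - 1) := by
          rw [volume_real_ball_of_pos x (by positivity), Real.rpow_sub ht, Real.rpow_one,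
            show -(2 * s) = -s * (2 : ℕ) by push_cast; ring, Real.rpow_mul_natCast ht.le]
          field_simp
          ring
  have hint := setIntegral_Ioi_zero_le_of_le_rpow (F := fun t => ∫ y in ball x (β * t),
      Aalpha n α f y t ^ 2 / t ^ (n + 1)) (by positivity) (by positivity) ht0
    (fun t ht => (setIntegral_eq_zero_of_forall_eq_zero fun y hy => by
      rw [hvanish t ht y hy]; simp).le) hlarge
  calc SalphaBeta n α β f x ≤ √(V * β ^ n * K ^ 2 * (t0 ^ (-(2 * s)) / (2 * s))) :=
        Real.sqrt_le_sqrt hint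
    _ = √(V * β ^ n / (2 * s)) * K * t0 ^ (-s) := by
        rw [show -(2 * s) = -s * (2 : ℕ) by push_cast; ring, Real.rpow_mul_natCast ht0.le,
          show V * β ^ n * K ^ 2 * ((t0 ^ (-s)) ^ 2 / (2 * s))
            = V * β ^ n / (2 * s) * (K * t0 ^ (-s)) ^ 2 by ring,
          Real.sqrt_mul (by positivity), Real.sqrt_sq (by positivity), mul_assoc]

lemma Aalpha_le_of_integral_eq_zero {n : ℕ} {α : ℝ} (hα : 0 ≤ α) {b : En n → ℝ} {M r : ℝ}
    {x0 : En n} (hr : 0 ≤ r) (hb : Measurable b) (hbM : ∀ z, |b z| ≤ M)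
    (hsupp : ∀ z ∉ cube n x0 r, b z = 0) (hmean : ∫ z, b z = 0) (y : En n) {t : ℝ} (ht : 0 < t) :
    Aalpha n α b y t ≤ M * r ^ n * (√n * (r / 2)) ^ α * t ^ (-((n : ℝ) + α)) := by
  have hcube : volume (cube n x0 r) < ⊤ := by rw [volume_cube]; finiteness
  have hbint : Integrable b := (IntegrableOn.of_bound hcube hb.aestronglyMeasurable M
    (ae_of_all _ hbM)).integrable_of_forall_notMem_eq_zero hsupp
  refine Aalpha_le_of_forall_le fun φ hφ => ?_
  have := abs_integral_mul_dilate_le hα hφ.2.2 (by positivity) hcube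
    (cube_subset_closedBall n x0 hr) hbM hsupp hbint hmean ht y
  rwa [Measure.real, volume_cube, ENNReal.toReal_pow, ENNReal.toReal_ofReal hr, ← mul_assoc] at this

lemma Aalpha_eq_zero_of_far_from_cube {n : ℕ} {α β r t : ℝ} {b : En n → ℝ} {x0 x y : En n}
    (hr : 0 ≤ r) (hsupp : ∀ z ∉ cube n x0 r, b z = 0) (hx : √n * r < ‖x - x0‖) (hβ : 1 ≤ β)
    (ht : t ∈ Ioo 0 (‖x - x0‖ / (4 * β))) (hy : y ∈ ball x (β * t)) : Aalpha n α b y t = 0 := by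
  refine Aalpha_eq_zero_of_forall_lt_norm_sub ht.1 fun z hz => ?_
  have hzQ : z ∈ cube n x0 r := by_contra fun h => hz (hsupp z h)
  rw [← dist_eq_norm]
  refine lt_dist_of_dist_lt_half (x0 := x0) ?_ hy ?_ <;> rw [dist_eq_norm x x0]
  · have := mem_closedBall.1 (cube_subset_closedBall n x0 hr hzQ)
    linarith
  · have := (lt_div_iff₀' (by positivity)).1 ht.2
    nlinarith [ht.1]

lemma SalphaBeta_atom_bound_eq {n : ℕ} {α V M r D : ℝ} (j : ℕ) (hα : 0 ≤ α) (hV : 0 ≤ V)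
    (hr : 0 < r) (hD : 0 < D) :
    √(V * (2 ^ j) ^ n / (2 * (n + α))) * (M * r ^ n * (√n * (r / 2)) ^ α) *
        (D / (4 * 2 ^ j)) ^ (-((n : ℝ) + α)) =
      √(V / (2 * (n + α))) * (√n / 2) ^ α * 2 ^ (2 * ((n : ℝ) + α)) *
        2 ^ ((j : ℝ) * (3 * n + 2 * α) / 2) * M * r ^ ((n : ℝ) + α) / D ^ ((n : ℝ) + α) := by
  set s : ℝ := n + α with hs
  have h1 : √(V * (2 ^ j) ^ n / (2 * s)) = √(V / (2 * s)) * 2 ^ ((j : ℝ) * n / 2) := by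
    rw [mul_div_right_comm, Real.sqrt_mul (by positivity), ← pow_mul, ← Real.rpow_natCast,
      Real.sqrt_eq_rpow (2 ^ _), ← Real.rpow_mul zero_le_two]
    push_cast
    ring_nf
  have h2 : (√n * (r / 2)) ^ α = (√n / 2) ^ α * r ^ α := by
    rw [← Real.mul_rpow (by positivity) hr.le]
    ring_nf
  have h3 : (D / (4 * 2 ^ j)) ^ (-s) = 2 ^ (((j : ℝ) + 2) * s) / D ^ s := by
    rw [show (4 : ℝ) * 2 ^ j = 2 ^ (j + 2) by ring, Real.rpow_neg (by positivity),
      Real.div_rpow hD.le (by positivity), inv_div, ← Real.rpow_natCast,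
      ← Real.rpow_mul zero_le_two]
    push_cast
    rfl
  have h4 : r ^ s = r ^ n * r ^ α := by rw [Real.rpow_add hr, Real.rpow_natCast]
  have h5 : (2 : ℝ) ^ ((j : ℝ) * n / 2) * 2 ^ (((j : ℝ) + 2) * s)
      = 2 ^ (2 * s) * 2 ^ ((j : ℝ) * (3 * n + 2 * α) / 2) := by
    rw [← Real.rpow_add two_pos, ← Real.rpow_add two_pos, hs]
    ring_nf
  rw [h1, h2, h3, h4]
  linear_combination (√(V / (2 * s)) * (√n / 2) ^ α * M * r ^ n * r ^ α / D ^ s) * h5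

theorem SalphaBeta_atom_decay_general (n : ℕ) (α : ℝ) (hn : 1 ≤ n) (hα0 : 0 < α) :
    ∃ C > 0, ∀ (j : ℕ), 1 ≤ j → ∀ (b : En n → ℝ) (M : ℝ) (x0 : En n) (r : ℝ),
      0 < r → Measurable b → (∀ z, |b z| ≤ M) →
      (∀ z, z ∉ cube n x0 r → b z = 0) → (∫ z, b z) = 0 →
      ∀ x : En n, Real.sqrt n * r < ‖x - x0‖ →
        SalphaBeta n α (2 ^ j) b x ≤
          C * 2 ^ ((j : ℝ) * (3 * n + 2 * α) / 2) * M * r ^ ((n : ℝ) + α) /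
            ‖x - x0‖ ^ ((n : ℝ) + α) := by
  set V := volume.real (ball (0 : En n) 1)
  have hV : 0 < V := ENNReal.toReal_pos (measure_ball_pos _ _ one_pos).ne' measure_ball_lt_top.ne
  have hsqrt_n : 0 < √(n : ℝ) := Real.sqrt_pos.2 (by exact_mod_cast hn)
  refine ⟨√(V / (2 * (n + α))) * (√n / 2) ^ α * 2 ^ (2 * ((n : ℝ) + α)), by positivity, ?_⟩
  intro j _ b M x0 r hr hb hbM hsupp hmean x hx
  have hD : 0 < ‖x - x0‖ := lt_trans (by positivity) hx
  have hM : 0 ≤ M := (abs_nonneg _).trans (hbM 0)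
  calc SalphaBeta n α (2 ^ j) b x
      ≤ √(V * (2 ^ j) ^ n / (2 * (n + α))) * (M * r ^ n * (√n * (r / 2)) ^ α) *
          (‖x - x0‖ / (4 * 2 ^ j)) ^ (-((n : ℝ) + α)) :=
        SalphaBeta_le_of_Aalpha_le (by positivity) (by positivity) (by positivity) (by positivity)
          (fun t ht y hy => Aalpha_eq_zero_of_far_from_cube hr.le hsupp hx
            (one_le_pow₀ one_le_two) ht hy)
          (fun y t ht => Aalpha_le_of_integral_eq_zero hα0.le hr.le hb hbM hsupp hmean y ht)
    _ = _ := SalphaBeta_atom_bound_eq j hα0.le hV.le hr hD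

/-- Decay of the varying-aperture intrinsic square function `S_{α,2^j}` of an
atom-like function away from its cube. -/
theorem SalphaBeta_atom_decay (n : ℕ) (α : ℝ) (hn : 1 ≤ n) (hα0 : 0 < α) (hα1 : α ≤ 1) :
    ∃ C > 0, ∀ (j : ℕ), 1 ≤ j → ∀ (b : En n → ℝ) (M : ℝ) (x0 : En n) (r : ℝ),
      0 < r → Measurable b → (∀ z, |b z| ≤ M) →
      (∀ z, z ∉ cube n x0 r → b z = 0) → (∫ z, b z) = 0 →
      ∀ x : En n, Real.sqrt n * r < ‖x - x0‖ →
        SalphaBeta n α (2 ^ j) b x ≤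
          C * 2 ^ ((j : ℝ) * (3 * n + 2 * α) / 2) * M * r ^ ((n : ℝ) + α) /
            ‖x - x0‖ ^ ((n : ℝ) + α) :=
  SalphaBeta_atom_decay_general n α hn hα0
end
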